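/- arXiv:2201.00442 — 3 statements merged into one kernel-verified Lean document; each statement's English description precedes it below -/
import Mathlib

section
/- Each C₍ᵢ₎ (i ≥ 0) is an ideal of A, and the filtration is decreasing: C₍ᵢ₊₁₎ ⊆ C₍ᵢ₎ for all i ≥ 0. (This is the paper's assertion that a singular Lie filtration together with a submanifold determines a filtration of the algebra of functions by ideals.) -/
/- Setting: `M` is a smooth manifold (modelled on a normed space `E` with model with
corners `IM`), and `A = C^∞(M, ℝ)` is its commutative ℝ-algebra of smooth real-valued
functions.  `Derivation ℝ A A` plays the role of the vector fields on `M`. -/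

open scoped Manifold

noncomputable section

variable {E : Type*} [NormedAddCommGroup E] [NormedSpace ℝ E]
  {HM : Type*} [TopologicalSpace HM] {IM : ModelWithCorners ℝ E HM}
  {M : Type*} [TopologicalSpace M] [ChartedSpace HM M]

/-- `A = C^∞(M, ℝ)`, the algebra of smooth real-valued functions on `M`. -/
local notation "A" => C^(⊤:ℕ∞)⟮IM, M; ℝ⟯

/-- The filtration `C_(i)` of `A = C^∞(M, ℝ)` determined by the filtration `H` of the
derivations (with `H j` playing the role of `H_{-j}`) and the ideal `I` (the vanishing
ideal of the submanifold `N`):  `C_(0) = A`, `C_(1) = I`, and for `i ≥ 2`,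
`C_(i) = {f ∈ I | ∀ 0 < j < i, ∀ X ∈ H_{-j}, X f ∈ C_(i-j)}`. -/
def weightedFiltration (H : ℕ → Submodule A (Derivation ℝ A A)) (I : Ideal A) : ℕ → Set A
  | 0 => Set.univ
  | 1 => I
  | (i+2) => {f | f ∈ I ∧ ∀ j, 0 < j → j < i + 2 →
      ∀ X ∈ H j, X f ∈ weightedFiltration H I (i + 2 - j)}
termination_by i => i
decreasing_by omega

/-- Auxiliary: the key closure properties, by strong induction. -/
theorem weightedFiltration_aux
    (H : ℕ → Submodule A (Derivation ℝ A A)) (I : Ideal A) :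
    ∀ i : ℕ,
      ((0 : A) ∈ weightedFiltration H I i ∧
        (∀ a b : A, a ∈ weightedFiltration H I i → b ∈ weightedFiltration H I i →
          a + b ∈ weightedFiltration H I i) ∧
        (∀ c a : A, a ∈ weightedFiltration H I i → c * a ∈ weightedFiltration H I i)) ∧
      weightedFiltration H I (i + 1) ⊆ weightedFiltration H I i := by
  intro i
  induction i using Nat.strong_induction_on with
  | _ n ih =>
    match n with
    | 0 =>
      simp only [weightedFiltration]
      exact ⟨⟨trivial, fun _ _ _ _ => trivial, fun _ _ _ => trivial⟩, fun f _ => trivial⟩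
    | 1 =>
      simp only [weightedFiltration, SetLike.mem_coe]
      refine ⟨⟨I.zero_mem, fun a b ha hb => I.add_mem ha hb,
        fun c a ha => I.mul_mem_left c ha⟩, ?_⟩
      intro f hf
      simp only [Set.mem_setOf_eq] at hf
      exact hf.1
    | (m+2) =>
      -- the antitone chain, from the inductive hypothesis
      have chain : ∀ a, a ≤ m + 2 → ∀ b, b ≤ a →
          weightedFiltration H I a ⊆ weightedFiltration H I b := by
        intro a
        induction a with
        | zero =>
          intro _ b hb
          obtain rfl : b = 0 := by omega
          exact fun _ h => h
        | succ k ihk =>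
          intro ha b hb
          rcases Nat.eq_or_lt_of_le hb with h | h
          · subst h; exact fun _ h => h
          · exact ((ih k (by omega)).2).trans (ihk (by omega) b (by omega))
      refine ⟨⟨?_, ?_, ?_⟩, ?_⟩
      · -- 0 ∈ C_{m+2}
        simp only [weightedFiltration, Set.mem_setOf_eq]
        refine ⟨I.zero_mem, fun j hj hj' X _ => ?_⟩
        rw [map_zero]
        exact ((ih (m + 2 - j) (by omega)).1).1
      · -- addition
        intro a b ha hb
        simp only [weightedFiltration, Set.mem_setOf_eq] at ha hb ⊢
        refine ⟨I.add_mem ha.1 hb.1, fun j hj hj' X hX => ?_⟩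
        rw [map_add]
        exact ((ih (m + 2 - j) (by omega)).1).2.1 _ _ (ha.2 j hj hj' X hX)
          (hb.2 j hj hj' X hX)
      · -- multiplication by an arbitrary element
        intro c a ha
        simp only [weightedFiltration, Set.mem_setOf_eq] at ha ⊢
        refine ⟨I.mul_mem_left c ha.1, fun j hj hj' X hX => ?_⟩
        have hleib : X (c * a) = c * X a + a * X c := by
          rw [Derivation.leibniz, smul_eq_mul, smul_eq_mul]
        rw [hleib]
        have h1 : c * X a ∈ weightedFiltration H I (m + 2 - j) :=
          ((ih (m + 2 - j) (by omega)).1).2.2 _ _ (ha.2 j hj hj' X hX)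
        have haj : a ∈ weightedFiltration H I (m + 2 - j) := by
          have := chain (m + 2) le_rfl (m + 2 - j) (by omega)
          apply this
          simp only [weightedFiltration, Set.mem_setOf_eq]
          exact ha
        have h2 : a * X c ∈ weightedFiltration H I (m + 2 - j) := by
          rw [mul_comm]
          exact ((ih (m + 2 - j) (by omega)).1).2.2 _ _ haj
        exact ((ih (m + 2 - j) (by omega)).1).2.1 _ _ h1 h2
      · -- C_{m+3} ⊆ C_{m+2}
        intro f hf
        simp only [weightedFiltration, Set.mem_setOf_eq] at hf ⊢
        refine ⟨hf.1, fun j hj hj' X hX => ?_⟩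
        have h3 : X f ∈ weightedFiltration H I (m + 1 + 2 - j) :=
          hf.2 j hj (by omega) X hX
        have e : m + 1 + 2 - j = (m + 2 - j) + 1 := by omega
        rw [e] at h3
        exact (ih (m + 2 - j) (by omega)).2 h3

/-- Each `C_(i)` (`i ≥ 0`) is an ideal of `A`, and the filtration is
decreasing: `C_(i+1) ⊆ C_(i)` for all `i ≥ 0`. -/
theorem weightedFiltration_isIdeal_and_decreasing
    (r : ℕ) (hr : 1 ≤ r)
    (H : ℕ → Submodule A (Derivation ℝ A A))
    (hmono : ∀ i j : ℕ, 1 ≤ i → i ≤ j → H i ≤ H j)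
    (htop : ∀ j : ℕ, r ≤ j → H j = ⊤)
    (I : Ideal A) (i : ℕ) :
    (∃ J : Ideal A, (J : Set A) = weightedFiltration H I i) ∧
      weightedFiltration H I (i + 1) ⊆ weightedFiltration H I i := by
  obtain ⟨⟨h0, hadd, hmul⟩, hdec⟩ := weightedFiltration_aux H I i
  refine ⟨⟨{ carrier := weightedFiltration H I i
             zero_mem' := h0
             add_mem' := fun ha hb => hadd _ _ ha hb
             smul_mem' := fun c a ha => by
               simpa [smul_eq_mul] using hmul c a ha }, rfl⟩, hdec⟩
end
end

section
/- The filtration is multiplicative: C₍ᵢ₎ · C₍ⱼ₎ ⊆ C₍ᵢ₊ⱼ₎ for all i, j ≥ 0, where C₍ᵢ₎ · C₍ⱼ₎ denotes the set of finite sums of products fg with f ∈ C₍ᵢ₎ and g ∈ C₍ⱼ₎. -/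
/- Setting: `M` is a smooth manifold (modelled on a normed space `E` with model with
corners `IM`), and `A = C^∞(M, ℝ)` is its commutative ℝ-algebra of smooth real-valued
functions.  `Derivation ℝ A A` plays the role of the vector fields on `M`. -/

open scoped Manifold Pointwise

noncomputable section

variable {E : Type*} [NormedAddCommGroup E] [NormedSpace ℝ E]
  {HM : Type*} [TopologicalSpace HM] {IM : ModelWithCorners ℝ E HM}
  {M : Type*} [TopologicalSpace M] [ChartedSpace HM M]

/-- `A = C^∞(M, ℝ)`, the algebra of smooth real-valued functions on `M`. -/
local notation "A" => C^(⊤:ℕ∞)⟮IM, M; ℝ⟯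

lemma wf_zero_mem (H : ℕ → Submodule A (Derivation ℝ A A)) (I : Ideal A) :
    ∀ i, (0 : A) ∈ weightedFiltration H I i := by
  intro i
  induction i using Nat.strong_induction_on with
  | _ i ih =>
    match i with
    | 0 => rw [weightedFiltration]; trivial
    | 1 => rw [weightedFiltration]; exact I.zero_mem
    | (n+2) =>
      rw [weightedFiltration]
      refine ⟨I.zero_mem, fun j hj hj2 X hX => ?_⟩
      rw [map_zero]
      exact ih _ (by omega)

lemma wf_add_mem (H : ℕ → Submodule A (Derivation ℝ A A)) (I : Ideal A) :
    ∀ i, ∀ f g : A, f ∈ weightedFiltration H I i → g ∈ weightedFiltration H I i →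
      f + g ∈ weightedFiltration H I i := by
  intro i
  induction i using Nat.strong_induction_on with
  | _ i ih =>
    match i with
    | 0 => intro f g _ _; rw [weightedFiltration]; trivial
    | 1 => intro f g hf hg; rw [weightedFiltration] at *; exact I.add_mem hf hg
    | (n+2) =>
      intro f g hf hg
      rw [weightedFiltration] at *
      refine ⟨I.add_mem hf.1 hg.1, fun j hj hj2 X hX => ?_⟩
      rw [map_add]
      exact ih _ (by omega) _ _ (hf.2 j hj hj2 X hX) (hg.2 j hj hj2 X hX)

lemma wf_antitone_succ (H : ℕ → Submodule A (Derivation ℝ A A)) (I : Ideal A) :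
    ∀ i, weightedFiltration H I (i + 1) ⊆ weightedFiltration H I i := by
  intro i
  induction i using Nat.strong_induction_on with
  | _ i ih =>
    match i with
    | 0 => intro f _; rw [weightedFiltration]; trivial
    | 1 =>
      intro f hf
      rw [weightedFiltration] at hf
      rw [weightedFiltration]
      exact hf.1
    | (n+2) =>
      intro f hf
      rw [weightedFiltration] at hf
      rw [weightedFiltration]
      refine ⟨hf.1, fun j hj hj2 X hX => ?_⟩
      have h1 : X f ∈ weightedFiltration H I (n + 3 - j) :=
        hf.2 j hj (by omega) X hX
      have h2 : n + 3 - j = (n + 2 - j) + 1 := by omega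
      rw [h2] at h1
      exact ih _ (by omega) h1

lemma wf_antitone (H : ℕ → Submodule A (Derivation ℝ A A)) (I : Ideal A) :
    ∀ i j, i ≤ j → weightedFiltration H I j ⊆ weightedFiltration H I i := by
  intro i j hij
  induction j with
  | zero => simp_all
  | succ n ihn =>
    rcases Nat.lt_or_ge i (n+1) with h | h
    · exact (ihn (by omega)).trans' (wf_antitone_succ H I n)
    · have : i = n + 1 := by omega
      subst this
      exact fun _ h => h

lemma wf_subset_I (H : ℕ → Submodule A (Derivation ℝ A A)) (I : Ideal A) :
    ∀ i, 1 ≤ i → weightedFiltration H I i ⊆ I := by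
  intro i hi
  match i, hi with
  | 1, _ => intro f hfm; rw [weightedFiltration] at hfm; exact hfm
  | (n+2), _ => rw [weightedFiltration]; exact fun f hf => hf.1

lemma wf_smul (H : ℕ → Submodule A (Derivation ℝ A A)) (I : Ideal A) :
    ∀ i, ∀ a f : A, f ∈ weightedFiltration H I i → a * f ∈ weightedFiltration H I i := by
  intro i
  induction i using Nat.strong_induction_on with
  | _ i ih =>
    match i with
    | 0 => intro a f _; rw [weightedFiltration]; trivial
    | 1 => intro a f hf; rw [weightedFiltration] at *; exact I.mul_mem_left a hf
    | (n+2) =>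
      intro a f hf
      rw [weightedFiltration] at *
      refine ⟨I.mul_mem_left a hf.1, fun j hj hj2 X hX => ?_⟩
      rw [Derivation.leibniz, smul_eq_mul, smul_eq_mul]
      have h1 : a * X f ∈ weightedFiltration H I (n + 2 - j) :=
        ih _ (by omega) a (X f) (hf.2 j hj hj2 X hX)
      have h2 : f * X a ∈ weightedFiltration H I (n + 2 - j) := by
        have hf' : f ∈ weightedFiltration H I (n + 2 - j) := by
          refine wf_antitone H I _ (n + 2) (by omega) ?_
          rw [weightedFiltration]; exact hf
        have := ih (n + 2 - j) (by omega) (X a) f hf'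
        rwa [mul_comm] at this
      exact wf_add_mem H I _ _ _ h1 h2

lemma wf_mul_mem (H : ℕ → Submodule A (Derivation ℝ A A)) (I : Ideal A) :
    ∀ i j : ℕ, ∀ f g : A, f ∈ weightedFiltration H I i → g ∈ weightedFiltration H I j →
      f * g ∈ weightedFiltration H I (i + j) := by
  have key : ∀ n : ℕ, ∀ i j : ℕ, i + j = n → ∀ f g : A,
      f ∈ weightedFiltration H I i → g ∈ weightedFiltration H I j →
      f * g ∈ weightedFiltration H I (i + j) := by
    intro n
    induction n using Nat.strong_induction_on with
    | _ n ih =>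
      intro i j hn f g hf hg
      subst hn
      rcases h : i + j with _ | _ | m
      · rw [weightedFiltration]; trivial
      · show f * g ∈ weightedFiltration H I 1
        rw [weightedFiltration]
        rcases Nat.eq_zero_or_pos i with hi | hi
        · have hj : j = 1 := by omega
          subst hi; subst hj
          rw [weightedFiltration] at hg
          exact I.mul_mem_left f hg
        · have hi1 : i = 1 := by omega
          have hj : j = 0 := by omega
          subst hi1; subst hj
          rw [weightedFiltration] at hf
          exact I.mul_mem_right g hf
      · show f * g ∈ weightedFiltration H I (m + 2)
        rw [weightedFiltration]
        constructor
        · rcases Nat.eq_zero_or_pos i with hi | hi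
          · have hj : 1 ≤ j := by omega
            exact I.mul_mem_left f (wf_subset_I H I j hj hg)
          · exact I.mul_mem_right g (wf_subset_I H I i hi hf)
        · intro k hk hk2 X hX
          rw [Derivation.leibniz, smul_eq_mul, smul_eq_mul]
          have hterm1 : f * X g ∈ weightedFiltration H I (m + 2 - k) := by
            rcases Nat.lt_or_ge k j with hkj | hkj
            · -- X g ∈ C_{j-k}, product ∈ C_{i + (j - k)} = C_{m+2-k}
              have hXg : X g ∈ weightedFiltration H I (j - k) := by
                obtain ⟨p, rfl⟩ : ∃ p, j = p + 2 := ⟨j - 2, by omega⟩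
                rw [weightedFiltration] at hg
                exact hg.2 k hk (by omega) X hX
              have := ih (i + (j - k)) (by omega) i (j - k) rfl f (X g) hf hXg
              have heq : i + (j - k) = m + 2 - k := by omega
              rwa [heq] at this
            · -- product ∈ C_i ⊆ C_{m+2-k}
              have hf' : f ∈ weightedFiltration H I (m + 2 - k) :=
                wf_antitone H I (m + 2 - k) i (by omega) hf
              have := wf_smul H I (m + 2 - k) (X g) f hf'
              rwa [mul_comm] at this
          have hterm2 : g * X f ∈ weightedFiltration H I (m + 2 - k) := by
            rcases Nat.lt_or_ge k i with hki | hki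
            · have hXf : X f ∈ weightedFiltration H I (i - k) := by
                obtain ⟨p, rfl⟩ : ∃ p, i = p + 2 := ⟨i - 2, by omega⟩
                rw [weightedFiltration] at hf
                exact hf.2 k hk (by omega) X hX
              have := ih (j + (i - k)) (by omega) j (i - k) rfl g (X f) hg hXf
              have heq : j + (i - k) = m + 2 - k := by omega
              rwa [heq] at this
            · have hg' : g ∈ weightedFiltration H I (m + 2 - k) :=
                wf_antitone H I (m + 2 - k) j (by omega) hg
              have := wf_smul H I (m + 2 - k) (X f) g hg'
              rwa [mul_comm] at this
          exact wf_add_mem H I _ _ _ hterm1 hterm2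
  intro i j f g hf hg
  exact key (i + j) i j rfl f g hf hg

/-- The filtration is multiplicative: `C_(i) · C_(j) ⊆ C_(i+j)` for all
`i, j ≥ 0`, where `C_(i) · C_(j)` denotes the set of finite sums of products `f * g`
with `f ∈ C_(i)` and `g ∈ C_(j)` (the additive submonoid generated by the pointwise
product set). -/
theorem weightedFiltration_multiplicative
    (r : ℕ) (hr : 1 ≤ r)
    (H : ℕ → Submodule A (Derivation ℝ A A))
    (hmono : ∀ i j : ℕ, 1 ≤ i → i ≤ j → H i ≤ H j)
    (htop : ∀ j : ℕ, r ≤ j → H j = ⊤)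
    (I : Ideal A) (i j : ℕ) :
    ∀ f : A, f ∈ AddSubmonoid.closure (weightedFiltration H I i * weightedFiltration H I j) →
      f ∈ weightedFiltration H I (i + j) := by
  intro f hf
  let T : AddSubmonoid A :=
    { carrier := weightedFiltration H I (i + j)
      add_mem' := fun ha hb => wf_add_mem H I (i + j) _ _ ha hb
      zero_mem' := wf_zero_mem H I (i + j) }
  have hsub : weightedFiltration H I i * weightedFiltration H I j ⊆ T := by
    rintro x ⟨a, ha, b, hb, rfl⟩
    exact wf_mul_mem H I i j a b ha hb
  exact AddSubmonoid.closure_le.mpr hsub hf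
end
end

section
/- For an ℝ-linear map D : A → A, let U_D : B → B be the 𝔸ᵣ-linear map with U_D(Σ_{i=0}^r fᵢxⁱ) = Σ_{i=0}^r fᵢxⁱ + D(f₀)xʳ. Then: (i) U_D is a unital ring homomorphism of B if and only if D is a derivation of A; (ii) for derivations D, D′ of A one has U_D ∘ U_{D′} = U_{D+D′}; (iii) a unital 𝔸ᵣ-linear ring endomorphism U of B satisfies U(b) − b ∈ xʳB for all b ∈ B if and only if U = U_D for a unique derivation D of A. Consequently the kernel of the reduction homomorphism 𝔘ᵣ → 𝔘ᵣ₋₁ is a copy of the vector fields 𝔛(M) with group structure given by addition (Lemma 'lem:ker' of the paper). -/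
/- Setting: `M` is a smooth manifold and `A = C^∞(M, ℝ)` its commutative ℝ-algebra of
smooth real-valued functions.  For a fixed `r ≥ 1`, `B = A[x]/(x^{r+1}) ≅ A ⊗ 𝔸ᵣ` is
realized as `AdjoinRoot (X^(r+1) : Polynomial A)`, with `ιB : A →+* B` the inclusion of
constants and `xB` the class of `x`.  An ℝ-linear map `B → B` is `𝔸ᵣ`-linear iff it
commutes with multiplication by `xB`. -/

open scoped Manifold

noncomputable section

variable {E : Type*} [NormedAddCommGroup E] [NormedSpace ℝ E]
  {HM : Type*} [TopologicalSpace HM] {IM : ModelWithCorners ℝ E HM}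
  {M : Type*} [TopologicalSpace M] [ChartedSpace HM M]

/-- `A = C^∞(M, ℝ)`, the algebra of smooth real-valued functions on `M`. -/
local notation "A" => C^(⊤:ℕ∞)⟮IM, M; ℝ⟯

variable (r : ℕ)

/-- `B = A[x]/(x^{r+1})`. -/
local notation "B" => AdjoinRoot ((Polynomial.X : Polynomial A) ^ (r + 1))
/-- the inclusion `A → B`. -/
local notation "ιB" => AdjoinRoot.of ((Polynomial.X : Polynomial A) ^ (r + 1))
/-- the class `x ∈ B`. -/
local notation "xB" => AdjoinRoot.root ((Polynomial.X : Polynomial A) ^ (r + 1))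

/-!
Write `b ∈ B` as `b = f₀ + x c` with `f₀ ∈ A`. Since `x · xʳ = 0`, an `𝔸ᵣ`-linear `U` with
`U(f) = f + D(f) xʳ` on `A` satisfies `x (U c − c) = 0` for every `c`, hence
`U(b) = b + D(f₀) xʳ`; and `xʳ b = f₀ xʳ`. As `x^{2r} = 0` for `r ≥ 1`, multiplicativity of `U`
then amounts to the Leibniz rule for `D`, and composites add. Conversely, if `U ≡ id` modulo
`xʳ`, then `U(f) − f = D(f) xʳ` defines `D`, which is linear because `f ↦ f xʳ` is injective.
-/

theorem LinearMap.exists_comp_eq_of_range_le {k M N P : Type*} [Semiring k] [AddCommMonoid M]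
    [AddCommMonoid N] [AddCommMonoid P] [Module k M] [Module k N] [Module k P]
    {φ : M →ₗ[k] N} (hφ : Function.Injective φ) {ψ : P →ₗ[k] N}
    (h : LinearMap.range ψ ≤ LinearMap.range φ) : ∃ D : P →ₗ[k] M, φ ∘ₗ D = ψ :=
  ⟨(LinearEquiv.ofInjective φ hφ).symm ∘ₗ ψ.codRestrict _ fun x => h ⟨x, rfl⟩, by
    ext x
    simp⟩

namespace TruncatedPolynomial

open Polynomial

variable {R : Type*} [CommRing R]

local notation "𝔹" => AdjoinRoot ((X : R[X]) ^ (r + 1))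
local notation "ι" => AdjoinRoot.of ((X : R[X]) ^ (r + 1))
local notation "ε" => AdjoinRoot.root ((X : R[X]) ^ (r + 1))

def constCoeff : 𝔹 →+* R :=
  AdjoinRoot.lift (RingHom.id R) 0 (by simp)

theorem constCoeff_mk (p : R[X]) : constCoeff r (AdjoinRoot.mk _ p) = p.coeff 0 := by
  rw [constCoeff, AdjoinRoot.lift_mk, coeff_zero_eq_eval_zero, eval₂_id]

@[simp]
theorem constCoeff_of (f : R) : constCoeff r (ι f) = f :=
  AdjoinRoot.lift_of _

@[simp]
theorem constCoeff_root : constCoeff r ε = 0 :=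
  AdjoinRoot.lift_root _

theorem root_pow_eq_zero {n : ℕ} (hn : r < n) : ε ^ n = 0 :=
  pow_eq_zero_of_le hn (by rw [← AdjoinRoot.mk_X, ← map_pow, AdjoinRoot.mk_self])

theorem exists_eq_constCoeff_add_root_mul (b : 𝔹) :
    ∃ c : 𝔹, b = ι (constCoeff r b) + ε * c := by
  obtain ⟨p, rfl⟩ := AdjoinRoot.mk_surjective b
  obtain ⟨q, hq⟩ := X_dvd_sub_C (p := p)
  refine ⟨AdjoinRoot.mk _ q, ?_⟩
  rw [constCoeff_mk, ← AdjoinRoot.mk_X, ← AdjoinRoot.mk_C, ← map_mul, ← map_add, ← hq,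
    add_sub_cancel]

theorem root_pow_mul (b : 𝔹) : ε ^ r * b = ι (constCoeff r b) * ε ^ r := by
  obtain ⟨c, hc⟩ := exists_eq_constCoeff_add_root_mul r b
  nth_rw 1 [hc]
  rw [mul_add, ← mul_assoc, ← pow_succ, root_pow_eq_zero r (Nat.lt_succ_self r), zero_mul,
    add_zero, mul_comm]

theorem of_mul_root_pow_injective : Function.Injective fun f : R => ι f * ε ^ r := by
  intro f g h
  have hdvd : (X : R[X]) ^ (r + 1) ∣ C (f - g) * X ^ r := by
    rw [← AdjoinRoot.mk_eq_zero, map_mul, map_pow, AdjoinRoot.mk_C, AdjoinRoot.mk_X, map_sub,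
      sub_mul, sub_eq_zero]
    exact h
  simpa [-map_sub, coeff_C_mul_X_pow, sub_eq_zero] using X_pow_dvd_iff.mp hdvd r r.lt_succ_self

theorem root_pow_mul_root_pow (hr : 1 ≤ r) : ε ^ r * ε ^ r = 0 := by
  rw [← pow_add]; exact root_pow_eq_zero r (by omega)

variable {k : Type*} [CommSemiring k] [Algebra k R]

theorem root_mul_map_sub_self {D : R →ₗ[k] R} {U : 𝔹 →ₗ[k] 𝔹}
    (hx : ∀ b, U (ε * b) = ε * U b) (hf : ∀ f, U (ι f) = ι f + ι (D f) * ε ^ r)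
    (b : 𝔹) :
    ε * (U b - b) = 0 := by
  obtain ⟨p, rfl⟩ := AdjoinRoot.mk_surjective b
  induction p using Polynomial.induction_on with
  | C a =>
    rw [AdjoinRoot.mk_C, hf, add_sub_cancel_left, mul_left_comm, ← pow_succ',
      root_pow_eq_zero r r.lt_succ_self, mul_zero]
  | add p q hp hq =>
    rw [map_add, map_add]
    linear_combination hp + hq
  | monomial n a ih =>
    rw [show C a * X ^ (n + 1) = X * (C a * X ^ n) by ring, map_mul, AdjoinRoot.mk_X, hx,
      ← mul_sub, ih, mul_zero]

theorem map_eq_add_constCoeff {D : R →ₗ[k] R} {U : 𝔹 →ₗ[k] 𝔹}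
    (hx : ∀ b, U (ε * b) = ε * U b) (hf : ∀ f, U (ι f) = ι f + ι (D f) * ε ^ r)
    (b : 𝔹) :
    U b = b + ι (D (constCoeff r b)) * ε ^ r := by
  obtain ⟨c, hc⟩ := exists_eq_constCoeff_add_root_mul r b
  have hU : U b = ι (constCoeff r b) + ι (D (constCoeff r b)) * ε ^ r + ε * U c := by
    nth_rw 1 [hc]
    rw [map_add, hf, hx]
  linear_combination hU - hc + root_mul_map_sub_self r hx hf c

theorem leibniz_of_map_mul (hr : 1 ≤ r) {D : R →ₗ[k] R} {U : 𝔹 →ₗ[k] 𝔹}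
    (hf : ∀ f, U (ι f) = ι f + ι (D f) * ε ^ r) (hm : ∀ b c : 𝔹, U (b * c) = U b * U c)
    (f g : R) : D (f * g) = D f * g + f * D g := by
  apply of_mul_root_pow_injective r
  have h := hm (ι f) (ι g)
  rw [← map_mul, hf, hf, hf, map_mul] at h
  simp only [map_add, map_mul]
  linear_combination h + ι (D f) * ι (D g) * root_pow_mul_root_pow (R := R) r hr

theorem map_mul_of_leibniz (hr : 1 ≤ r) {D : R →ₗ[k] R} {U : 𝔹 →ₗ[k] 𝔹}
    (hx : ∀ b, U (ε * b) = ε * U b) (hf : ∀ f, U (ι f) = ι f + ι (D f) * ε ^ r)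
    (hD : ∀ f g, D (f * g) = D f * g + f * D g) (b c : 𝔹) :
    U (b * c) = U b * U c := by
  rw [map_eq_add_constCoeff r hx hf, map_eq_add_constCoeff r hx hf b,
    map_eq_add_constCoeff r hx hf c, map_mul, hD, map_add, map_mul, map_mul]
  set Db := ι (D (constCoeff r b))
  set Dc := ι (D (constCoeff r c))
  linear_combination -Db * root_pow_mul r c - Dc * root_pow_mul r b
    - Db * Dc * root_pow_mul_root_pow (R := R) r hr

theorem map_one_and_map_mul_iff_leibniz (hr : 1 ≤ r) {D : R →ₗ[k] R} {U : 𝔹 →ₗ[k] 𝔹}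
    (hx : ∀ b, U (ε * b) = ε * U b) (hf : ∀ f, U (ι f) = ι f + ι (D f) * ε ^ r) :
    (U 1 = 1 ∧ ∀ b c : 𝔹, U (b * c) = U b * U c) ↔ ∀ f g, D (f * g) = D f * g + f * D g := by
  refine ⟨fun ⟨_, hm⟩ => leibniz_of_map_mul r hr hf hm,
    fun hD => ⟨?_, map_mul_of_leibniz r hr hx hf hD⟩⟩
  have hD1 : D 1 = 0 := by simpa using hD 1 1
  rw [← map_one ι, hf, hD1, map_zero, zero_mul, add_zero]

theorem comp_eq_of_add (hr : 1 ≤ r) {D D' : R →ₗ[k] R} {U U' U'' : 𝔹 →ₗ[k] 𝔹}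
    (hx : ∀ b, U (ε * b) = ε * U b) (hf : ∀ f, U (ι f) = ι f + ι (D f) * ε ^ r)
    (hx' : ∀ b, U' (ε * b) = ε * U' b) (hf' : ∀ f, U' (ι f) = ι f + ι (D' f) * ε ^ r)
    (hx'' : ∀ b, U'' (ε * b) = ε * U'' b)
    (hf'' : ∀ f, U'' (ι f) = ι f + ι (D f + D' f) * ε ^ r) :
    U.comp U' = U'' := by
  have hf_add : ∀ f, U'' (ι f) = ι f + ι ((D + D') f) * ε ^ r := hf''
  ext b
  have h0 : constCoeff r (ι (D' (constCoeff r b)) * ε ^ r) = 0 := by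
    simp [zero_pow (by omega : r ≠ 0)]
  rw [LinearMap.comp_apply, map_eq_add_constCoeff r hx' hf', map_add,
    map_eq_add_constCoeff r hx hf, map_eq_add_constCoeff r hx hf (_ * _), h0,
    map_eq_add_constCoeff r hx'' hf_add, LinearMap.add_apply, map_zero, map_zero,
    map_add]
  ring

theorem existsUnique_leibniz_of_root_pow_dvd_map_sub_self (hr : 1 ≤ r) {U : 𝔹 →ₗ[k] 𝔹}
    (hm : ∀ b c : 𝔹, U (b * c) = U b * U c) (h : ∀ b, ε ^ r ∣ U b - b) :
    ∃! D : R →ₗ[k] R, (∀ f g, D (f * g) = D f * g + f * D g) ∧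
      ∀ f, U (ι f) = ι f + ι (D f) * ε ^ r := by
  let ιₗ : R →ₗ[k] 𝔹 := (IsScalarTower.toAlgHom k R 𝔹).toLinearMap
  let φ : R →ₗ[k] 𝔹 := LinearMap.mulRight k (ε ^ r) ∘ₗ ιₗ
  have hrange : LinearMap.range (U ∘ₗ ιₗ - ιₗ) ≤ LinearMap.range φ := by
    rintro _ ⟨f, rfl⟩
    obtain ⟨c, hc⟩ := h (ι f)
    exact ⟨constCoeff r c, by simpa [φ, ιₗ, ← root_pow_mul] using hc.symm⟩
  obtain ⟨D, hD⟩ := LinearMap.exists_comp_eq_of_range_le (of_mul_root_pow_injective r) hrange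
  have hf : ∀ f, U (ι f) = ι f + ι (D f) * ε ^ r := fun f =>
    eq_add_of_sub_eq' (by simpa [φ, ιₗ] using (LinearMap.congr_fun hD f).symm)
  refine ⟨D, ⟨leibniz_of_map_mul r hr hf hm, hf⟩, fun D' ⟨_, hf'⟩ => ?_⟩
  ext f
  exact of_mul_root_pow_injective r (add_left_cancel ((hf' f).symm.trans (hf f)))

theorem root_pow_dvd_map_sub_self {D : R →ₗ[k] R} {U : 𝔹 →ₗ[k] 𝔹}
    (hx : ∀ b, U (ε * b) = ε * U b) (hf : ∀ f, U (ι f) = ι f + ι (D f) * ε ^ r)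
    (b : 𝔹) :
    ε ^ r ∣ U b - b :=
  ⟨ι (D (constCoeff r b)), by
    rw [map_eq_add_constCoeff r hx hf, add_sub_cancel_left, mul_comm]⟩

end TruncatedPolynomial

/-- `U_D` is encoded by its `𝔸ᵣ`-linearity and its values on `A`, which determine it
(`TruncatedPolynomial.map_eq_add_constCoeff`). -/
theorem kernel_of_reduction
    (hr : 1 ≤ r) :
    (∀ (D : A →ₗ[ℝ] A) (U : B →ₗ[ℝ] B),
        (∀ b : B, U (xB * b) = xB * U b) →
        (∀ f : A, U (ιB f) = ιB f + ιB (D f) * xB ^ r) →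
        ((U 1 = 1 ∧ ∀ b c : B, U (b * c) = U b * U c) ↔
          ∀ f g : A, D (f * g) = D f * g + f * D g)) ∧
    (∀ (D D' : A →ₗ[ℝ] A),
        (∀ f g : A, D (f * g) = D f * g + f * D g) →
        (∀ f g : A, D' (f * g) = D' f * g + f * D' g) →
        ∀ (U U' U'' : B →ₗ[ℝ] B),
        (∀ b : B, U (xB * b) = xB * U b) →
        (∀ f : A, U (ιB f) = ιB f + ιB (D f) * xB ^ r) →
        (∀ b : B, U' (xB * b) = xB * U' b) →
        (∀ f : A, U' (ιB f) = ιB f + ιB (D' f) * xB ^ r) →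
        (∀ b : B, U'' (xB * b) = xB * U'' b) →
        (∀ f : A, U'' (ιB f) = ιB f + ιB (D f + D' f) * xB ^ r) →
        U.comp U' = U'') ∧
    (∀ U : B →ₗ[ℝ] B,
        U 1 = 1 → (∀ b c : B, U (b * c) = U b * U c) →
        (∀ b : B, U (xB * b) = xB * U b) →
        ((∀ b : B, ∃ c : B, U b - b = xB ^ r * c) ↔
          (∃! D : A →ₗ[ℝ] A, (∀ f g : A, D (f * g) = D f * g + f * D g) ∧
            ∀ f : A, U (ιB f) = ιB f + ιB (D f) * xB ^ r))) := by
  open TruncatedPolynomial in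
  exact ⟨fun _ _ hx hf => map_one_and_map_mul_iff_leibniz r hr hx hf,
    fun _ _ _ _ _ _ _ hx hf hx' hf' hx'' hf'' => comp_eq_of_add r hr hx hf hx' hf' hx'' hf'',
    fun _ _ hm hx => ⟨existsUnique_leibniz_of_root_pow_dvd_map_sub_self r hr hm,
      fun ⟨_, ⟨_, hf⟩, _⟩ => root_pow_dvd_map_sub_self r hx hf⟩⟩
end
end
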